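/- arXiv:1407.6756 — 3 statements merged into one kernel-verified Lean document; each statement's English description precedes it below -/
import Mathlib

section
/- For the hash family h_a(x) = (a·x mod u) div (u/m) where u and m are powers of two with m < u and a ∈ [u] odd, for any h in the family and any x, x' ∈ [u], h(x) + h(x') is congruent modulo m to either h(x+x') or h(x+x') − 1 (i.e., the family is almost linear). -/
/-!
Write `u = d * m` with `d = u / m`. Floor division by `d` is additive up to a carry:
`⌊A/d⌋ + ⌊B/d⌋` is `⌊(A+B)/d⌋` or `⌊(A+B)/d⌋ - 1`. Reducing `A + B` modulo `u = d * m`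
before dividing by `d` only changes the quotient by a multiple of `m`, so the carry
relation survives modulo `m`.
-/

namespace Nat

theorem div_add_div_modEq_or {d n : ℕ} (hd : 0 < d) (hn : 0 < n) (a b : ℕ) :
    a / d + b / d ≡ (a + b) / d [MOD n] ∨ a / d + b / d ≡ (a + b) / d + (n - 1) [MOD n] := by
  rcases lt_or_ge (a % d + b % d) d with hlt | hge
  · exact .inl (by rw [add_div_eq_of_add_mod_lt hlt])
  · refine .inr ?_
    rw [add_div_eq_of_le_mod_add_mod hge hd, add_assoc, Nat.add_sub_of_le hn]
    exact (Nat.add_mod_right _ _).symm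

theorem mod_mul_div_modEq (X d m : ℕ) : X % (d * m) / d ≡ X / d [MOD m] := by
  rw [Nat.ModEq, Nat.mod_mul_right_div_self, Nat.mod_mod]

theorem mod_mul_div_add_modEq_or {d m : ℕ} (hd : 0 < d) (hm : 0 < m) (X Y : ℕ) :
    X % (d * m) / d + Y % (d * m) / d ≡ (X + Y) % (d * m) / d [MOD m] ∨
      X % (d * m) / d + Y % (d * m) / d ≡ (X + Y) % (d * m) / d + (m - 1) [MOD m] := by
  set A := X % (d * m)
  set B := Y % (d * m)
  have hsum : (A + B) / d ≡ (X + Y) % (d * m) / d [MOD m] := by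
    rw [Nat.add_mod X Y]
    exact (mod_mul_div_modEq _ _ _).symm
  rcases div_add_div_modEq_or hd hm A B with h | h
  · exact .inl (h.trans hsum)
  · exact .inr (h.trans (hsum.add_right _))

end Nat

theorem stmt0_general (w s : ℕ) (hsw : s < w) (a : ℕ)
    (h : ℕ → ℕ) (hdef : ∀ x, h x = (a * x % 2 ^ w) / (2 ^ w / 2 ^ s))
    (x x' : ℕ) :
    (h x + h x') % 2 ^ s = h (x + x') % 2 ^ s ∨
    (h x + h x') % 2 ^ s = (h (x + x') + (2 ^ s - 1)) % 2 ^ s := by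
  have hu : 2 ^ w = 2 ^ (w - s) * 2 ^ s := by rw [← pow_add, Nat.sub_add_cancel hsw.le]
  have hquot : 2 ^ w / 2 ^ s = 2 ^ (w - s) := by rw [hu, Nat.mul_div_cancel _ (by positivity)]
  simp only [hdef, hquot, Nat.mul_add]
  rw [hu]
  exact Nat.mod_mul_div_add_modEq_or (by positivity) (by positivity) (a * x) (a * x')

/-- Almost linearity of the hash family `h_a(x) = ((a*x) mod u) div (u/m)`
with `u = 2^w`, `m = 2^s`, `s < w`, `a` odd:
`h(x) + h(x')` is congruent mod `m` to `h(x+x')` or `h(x+x') - 1`. -/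
theorem stmt0 (w s : ℕ) (hsw : s < w) (a : ℕ) (ha : Odd a) (ha_lt : a < 2 ^ w)
    (h : ℕ → ℕ) (hdef : ∀ x, h x = (a * x % 2 ^ w) / (2 ^ w / 2 ^ s))
    (x x' : ℕ) (hx : x < 2 ^ w) (hx' : x' < 2 ^ w) :
    (h x + h x') % 2 ^ s = h (x + x') % 2 ^ s ∨
    (h x + h x') % 2 ^ s = (h (x + x') + (2 ^ s - 1)) % 2 ^ s :=
  stmt0_general w s hsw a h hdef x x'
end

section
/- Let G be the bipartite-like gadget graph: for each c ∈ C vertices c_A, c_B joined by an edge; for each a ∈ A vertices a', a'' joined by an edge, with a' joined to c_A for each c ∈ a; for each b ∈ B vertices b', b'' joined by an edge, with b' joined to c_B for each c ∈ b. Then the matching M consisting of all 'copy' edges {c_A,c_B}, {a',a''}, {b',b''} is a perfect matching of G, and it is the unique perfect matching of G. -/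
/-- Vertices of the gadget graph: `Sum.inl (c, false)` is `c_A`,
`Sum.inl (c, true)` is `c_B`, `Sum.inr (Sum.inl (a, false))` is `a'`,
`Sum.inr (Sum.inl (a, true))` is `a''`, and similarly for `b`. -/
abbrev GadgetV (α β γ : Type*) : Type _ := (γ × Bool) ⊕ ((α × Bool) ⊕ (β × Bool))

/-- Adjacency of the gadget graph: copy edges `{c_A, c_B}`, `{a', a''}`,
`{b', b''}`, together with edges `{a', c_A}` for `c ∈ a` and `{b', c_B}`
for `c ∈ b`. -/
def gadgetAdj {α β γ : Type*} (Sa : α → Set γ) (Sb : β → Set γ)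
    (u v : GadgetV α β γ) : Prop :=
  (∃ c, ({u, v} : Set (GadgetV α β γ)) =
      {Sum.inl (c, false), Sum.inl (c, true)}) ∨
  (∃ a, ({u, v} : Set (GadgetV α β γ)) =
      {Sum.inr (Sum.inl (a, false)), Sum.inr (Sum.inl (a, true))}) ∨
  (∃ b, ({u, v} : Set (GadgetV α β γ)) =
      {Sum.inr (Sum.inr (b, false)), Sum.inr (Sum.inr (b, true))}) ∨
  (∃ a c, c ∈ Sa a ∧ ({u, v} : Set (GadgetV α β γ)) =
      {Sum.inr (Sum.inl (a, false)), Sum.inl (c, false)}) ∨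
  (∃ b c, c ∈ Sb b ∧ ({u, v} : Set (GadgetV α β γ)) =
      {Sum.inr (Sum.inr (b, false)), Sum.inl (c, true)})

/-- The copy edges `{c_A, c_B}`, `{a', a''}`, `{b', b''}`. -/
def copyRel {α β γ : Type*} (u v : GadgetV α β γ) : Prop :=
  (∃ c, ({u, v} : Set (GadgetV α β γ)) =
      {Sum.inl (c, false), Sum.inl (c, true)}) ∨
  (∃ a, ({u, v} : Set (GadgetV α β γ)) =
      {Sum.inr (Sum.inl (a, false)), Sum.inr (Sum.inl (a, true))}) ∨
  (∃ b, ({u, v} : Set (GadgetV α β γ)) =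
      {Sum.inr (Sum.inr (b, false)), Sum.inr (Sum.inr (b, true))})

/-! The vertices `a''` and `b''` have a single neighbour, so every perfect matching contains the
edges `{a', a''}` and `{b', b''}`. The remaining neighbours `a'` of `c_A` are then already matched,
which forces `{c_A, c_B}`. Hence every perfect matching contains all copy edges, and since these
already cover every vertex, it consists of them alone. -/

namespace SimpleGraph.Subgraph

variable {V : Type*} {G : SimpleGraph V}

def ofInvolutive (f : V → V) (hf : Function.Involutive f) (hG : ∀ v, G.Adj v (f v)) :
    G.Subgraph where
  verts := Set.univ
  Adj u v := v = f u
  adj_sub := by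
    rintro u _ rfl
    exact hG u
  edge_vert _ := Set.mem_univ _
  symm := ⟨fun u v h => by rw [h, hf u]⟩

section ofInvolutive

variable {f : V → V} {hf : Function.Involutive f} {hG : ∀ v, G.Adj v (f v)}

@[simp]
theorem ofInvolutive_adj {u v : V} : (ofInvolutive f hf hG).Adj u v ↔ v = f u :=
  Iff.rfl

theorem ofInvolutive_isPerfectMatching : (ofInvolutive f hf hG).IsPerfectMatching :=
  isPerfectMatching_iff.2 fun v => ⟨f v, rfl, fun _ h => h⟩

theorem IsPerfectMatching.eq_ofInvolutive {M : G.Subgraph} (hM : M.IsPerfectMatching)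
    (hMf : ∀ v, M.Adj v (f v)) : M = ofInvolutive f hf hG := by
  ext u v
  · simp [hM.2 u, ofInvolutive]
  · rw [ofInvolutive_adj]
    exact ⟨fun h => hM.1.eq_of_adj_left h (hMf u), by rintro rfl; exact hMf u⟩

end ofInvolutive

theorem IsPerfectMatching.adj_of_forall_adj_eq {M : G.Subgraph} (hM : M.IsPerfectMatching)
    {u v : V} (h : ∀ w, G.Adj v w → w = u) : M.Adj v u := by
  obtain ⟨w, hw, -⟩ := isPerfectMatching_iff.1 hM v
  rwa [h w (M.adj_sub hw)] at hw

end SimpleGraph.Subgraph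

open SimpleGraph

section Gadget

variable {α β γ : Type*}

def gadgetPartner : GadgetV α β γ → GadgetV α β γ
  | Sum.inl (c, b) => Sum.inl (c, !b)
  | Sum.inr (Sum.inl (a, b)) => Sum.inr (Sum.inl (a, !b))
  | Sum.inr (Sum.inr (x, b)) => Sum.inr (Sum.inr (x, !b))

theorem gadgetPartner_involutive :
    Function.Involutive (gadgetPartner : GadgetV α β γ → GadgetV α β γ) := by
  rintro (⟨c, _ | _⟩ | ⟨a, _ | _⟩ | ⟨x, _ | _⟩) <;> rfl

theorem copyRel_iff_eq_gadgetPartner (u v : GadgetV α β γ) :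
    copyRel u v ↔ v = gadgetPartner u := by
  constructor
  · rintro (⟨c, h⟩ | ⟨a, h⟩ | ⟨b, h⟩) <;>
      rw [Set.pair_eq_pair_iff] at h <;>
      rcases h with ⟨rfl, rfl⟩ | ⟨rfl, rfl⟩ <;> rfl
  · rintro rfl
    rcases u with ⟨c, _ | _⟩ | ⟨a, _ | _⟩ | ⟨x, _ | _⟩
    · exact Or.inl ⟨c, rfl⟩
    · exact Or.inl ⟨c, Set.pair_comm _ _⟩
    · exact Or.inr (Or.inl ⟨a, rfl⟩)
    · exact Or.inr (Or.inl ⟨a, Set.pair_comm _ _⟩)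
    · exact Or.inr (Or.inr ⟨x, rfl⟩)
    · exact Or.inr (Or.inr ⟨x, Set.pair_comm _ _⟩)

variable {Sa : α → Set γ} {Sb : β → Set γ}

theorem gadgetAdj_gadgetPartner (v : GadgetV α β γ) : gadgetAdj Sa Sb v (gadgetPartner v) := by
  rcases (copyRel_iff_eq_gadgetPartner v _).2 rfl with h | h | h
  exacts [Or.inl h, Or.inr (Or.inl h), Or.inr (Or.inr (Or.inl h))]

theorem eq_of_gadgetAdj_inr_inl_true {a : α} {w : GadgetV α β γ}
    (h : gadgetAdj Sa Sb (Sum.inr (Sum.inl (a, true))) w) : w = Sum.inr (Sum.inl (a, false)) := by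
  simp only [gadgetAdj, Set.pair_eq_pair_iff] at h
  aesop

theorem eq_of_gadgetAdj_inr_inr_true {b : β} {w : GadgetV α β γ}
    (h : gadgetAdj Sa Sb (Sum.inr (Sum.inr (b, true))) w) : w = Sum.inr (Sum.inr (b, false)) := by
  simp only [gadgetAdj, Set.pair_eq_pair_iff] at h
  aesop

theorem eq_or_exists_of_gadgetAdj_inl_false {c : γ} {w : GadgetV α β γ}
    (h : gadgetAdj Sa Sb (Sum.inl (c, false)) w) :
    w = Sum.inl (c, true) ∨ ∃ a, w = Sum.inr (Sum.inl (a, false)) := by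
  simp only [gadgetAdj, Set.pair_eq_pair_iff] at h
  aesop

section PerfectMatching

variable {G : SimpleGraph (GadgetV α β γ)} (hG : ∀ u v, G.Adj u v ↔ gadgetAdj Sa Sb u v)
  {M : G.Subgraph} (hM : M.IsPerfectMatching)
include hG hM

theorem adj_inr_inl_of_isPerfectMatching (a : α) :
    M.Adj (Sum.inr (Sum.inl (a, true))) (Sum.inr (Sum.inl (a, false))) :=
  hM.adj_of_forall_adj_eq fun _ h => eq_of_gadgetAdj_inr_inl_true ((hG _ _).1 h)

theorem adj_inr_inr_of_isPerfectMatching (b : β) :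
    M.Adj (Sum.inr (Sum.inr (b, true))) (Sum.inr (Sum.inr (b, false))) :=
  hM.adj_of_forall_adj_eq fun _ h => eq_of_gadgetAdj_inr_inr_true ((hG _ _).1 h)

theorem adj_inl_of_isPerfectMatching (c : γ) : M.Adj (Sum.inl (c, false)) (Sum.inl (c, true)) := by
  obtain ⟨w, hw, -⟩ := Subgraph.isPerfectMatching_iff.1 hM (Sum.inl (c, false))
  obtain rfl | ⟨a, rfl⟩ := eq_or_exists_of_gadgetAdj_inl_false ((hG _ _).1 (M.adj_sub hw))
  · exact hw
  · have := hM.1.eq_of_adj_left hw.symm (adj_inr_inl_of_isPerfectMatching hG hM a).symm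
    simp at this

theorem adj_gadgetPartner_of_isPerfectMatching (v : GadgetV α β γ) :
    M.Adj v (gadgetPartner v) := by
  rcases v with ⟨c, _ | _⟩ | ⟨a, _ | _⟩ | ⟨b, _ | _⟩
  · exact adj_inl_of_isPerfectMatching hG hM c
  · exact (adj_inl_of_isPerfectMatching hG hM c).symm
  · exact (adj_inr_inl_of_isPerfectMatching hG hM a).symm
  · exact adj_inr_inl_of_isPerfectMatching hG hM a
  · exact (adj_inr_inr_of_isPerfectMatching hG hM b).symm
  · exact adj_inr_inr_of_isPerfectMatching hG hM b

end PerfectMatching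

end Gadget

/-- The matching consisting of all copy edges is a perfect matching of the
gadget graph, and it is its unique perfect matching. -/
theorem stmt13 {α β γ : Type*} (Sa : α → Set γ) (Sb : β → Set γ)
    (G : SimpleGraph (GadgetV α β γ))
    (hG : ∀ u v, G.Adj u v ↔ gadgetAdj Sa Sb u v) :
    ∃ M : G.Subgraph, (∀ u v, M.Adj u v ↔ copyRel u v) ∧
      M.IsPerfectMatching ∧
      ∀ M' : G.Subgraph, M'.IsPerfectMatching → M' = M := by
  have hGf : ∀ v, G.Adj v (gadgetPartner v) := fun v => (hG _ _).2 (gadgetAdj_gadgetPartner v)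
  refine ⟨.ofInvolutive gadgetPartner gadgetPartner_involutive hGf, fun u v => ?_,
    Subgraph.ofInvolutive_isPerfectMatching, fun M' hM' => ?_⟩
  · rw [Subgraph.ofInvolutive_adj, copyRel_iff_eq_gadgetPartner]
  · exact hM'.eq_ofInvolutive (adj_gadgetPartner_of_isPerfectMatching hG hM')
end

section
/- In the gadget graph G above augmented with two new vertices x, y and the two new edges {x, a''}, {y, b''} for a fixed a ∈ A and b ∈ B, the maximum matching of the augmented graph has size |M| + 1 (where M is the perfect matching of G) if and only if a ∩ b ≠ ∅; equivalently, there is an augmenting path with respect to M from x to y iff a ∩ b ≠ ∅. -/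
/-- Vertices of the augmented gadget graph: the old vertices, plus
`x = Sum.inr false` and `y = Sum.inr true`. -/
abbrev AugV (α β γ : Type*) : Type _ := GadgetV α β γ ⊕ Bool


/-!
A perfect matching of the augmented graph is forced along a path starting at `y`: the only
neighbour of `y` is `b₀''`, so `b₀'` must be matched to some `c_B` with `c ∈ b₀`, then `c_A` to
some `a'` with `c ∈ a`, and finally `a''` to `x`, which forces `a = a₀`. Conversely, for
`c ∈ a₀ ∩ b₀`, switching the copy matching `M` along the augmenting path
`x, a₀'', a₀', c_A, c_B, b₀', b₀'', y` gives a perfect matching.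
-/

namespace SimpleGraph

lemma exists_isPerfectMatching_of_involutive {V : Type*} {G : SimpleGraph V} {f : V → V}
    (hf : Function.Involutive f) (hadj : ∀ v, G.Adj v (f v)) :
    ∃ M : G.Subgraph, M.IsPerfectMatching := by
  let M : G.Subgraph :=
    { verts := Set.univ
      Adj := fun u v => f u = v
      adj_sub := fun h => h ▸ hadj _
      edge_vert := fun _ => trivial
      symm := ⟨fun u v h => h ▸ hf u⟩ }
  exact ⟨M, Subgraph.isPerfectMatching_iff.2 fun v => ⟨f v, rfl, fun _ hw => Eq.symm hw⟩⟩

end SimpleGraph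

section Gadget

variable {α β γ : Type*} {Sa : α → Set γ} {Sb : β → Set γ} {a0 : α} {b0 : β}

def augAdj (Sa : α → Set γ) (Sb : β → Set γ) (a0 : α) (b0 : β) (u v : AugV α β γ) : Prop :=
  (∃ u' v' : GadgetV α β γ, u = Sum.inl u' ∧ v = Sum.inl v' ∧ gadgetAdj Sa Sb u' v') ∨
  ({u, v} : Set (AugV α β γ)) = {Sum.inr false, Sum.inl (Sum.inr (Sum.inl (a0, true)))} ∨
  ({u, v} : Set (AugV α β γ)) = {Sum.inr true, Sum.inl (Sum.inr (Sum.inr (b0, true)))}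

lemma augAdj_inr_true_iff {w : AugV α β γ} :
    augAdj Sa Sb a0 b0 (Sum.inr true) w ↔ w = Sum.inl (Sum.inr (Sum.inr (b0, true))) := by
  simp [augAdj, gadgetAdj, Set.pair_eq_pair_iff]

lemma augAdj_bPrime_iff {b : β} {w : AugV α β γ} :
    augAdj Sa Sb a0 b0 (Sum.inl (Sum.inr (Sum.inr (b, false)))) w ↔
      w = Sum.inl (Sum.inr (Sum.inr (b, true))) ∨
        ∃ c, w = Sum.inl (Sum.inl (c, true)) ∧ c ∈ Sb b := by
  rw [or_comm]
  simp [augAdj, gadgetAdj, Set.pair_eq_pair_iff]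

lemma augAdj_cA_iff {c : γ} {w : AugV α β γ} :
    augAdj Sa Sb a0 b0 (Sum.inl (Sum.inl (c, false))) w ↔
      w = Sum.inl (Sum.inl (c, true)) ∨
        ∃ a, w = Sum.inl (Sum.inr (Sum.inl (a, false))) ∧ c ∈ Sa a := by
  simp [augAdj, gadgetAdj, Set.pair_eq_pair_iff]

lemma augAdj_aDoublePrime_iff {a : α} {w : AugV α β γ} :
    augAdj Sa Sb a0 b0 (Sum.inl (Sum.inr (Sum.inl (a, true)))) w ↔
      w = Sum.inl (Sum.inr (Sum.inl (a, false))) ∨ a = a0 ∧ w = Sum.inr false := by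
  simp [augAdj, gadgetAdj, Set.pair_eq_pair_iff]

theorem exists_mem_inter_of_isPerfectMatching {G' : SimpleGraph (AugV α β γ)}
    (hG' : ∀ u v, G'.Adj u v ↔ augAdj Sa Sb a0 b0 u v) {M : G'.Subgraph}
    (hM : M.IsPerfectMatching) : ∃ c, c ∈ Sa a0 ∧ c ∈ Sb b0 := by
  have mate : ∀ v, ∃ w, M.Adj v w ∧ augAdj Sa Sb a0 b0 v w := fun v =>
    let ⟨w, hvw, _⟩ := hM.1 (hM.2 v)
    ⟨w, hvw, (hG' v w).1 (M.adj_sub hvw)⟩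
  obtain ⟨w0, hw0, h0⟩ := mate (Sum.inr true)
  rw [augAdj_inr_true_iff] at h0
  subst h0
  obtain ⟨w1, hw1, h1⟩ := mate (Sum.inl (Sum.inr (Sum.inr (b0, false))))
  rcases augAdj_bPrime_iff.1 h1 with rfl | ⟨c, rfl, hcb⟩
  · exact absurd (hM.1.eq_of_adj_right hw0 hw1) (by simp)
  obtain ⟨w2, hw2, h2⟩ := mate (Sum.inl (Sum.inl (c, false)))
  rcases augAdj_cA_iff.1 h2 with rfl | ⟨a, rfl, hca⟩
  · exact absurd (hM.1.eq_of_adj_right hw1 hw2) (by simp)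
  obtain ⟨w3, hw3, h3⟩ := mate (Sum.inl (Sum.inr (Sum.inl (a, true))))
  rcases augAdj_aDoublePrime_iff.1 h3 with rfl | ⟨rfl, -⟩
  · exact absurd (hM.1.eq_of_adj_right hw2 hw3) (by simp)
  · exact ⟨c, hca, hcb⟩

open Classical in
/-- The partner function of the copy matching `M`, switched along the augmenting path
`x, a₀'', a₀', c_A, c_B, b₀', b₀'', y`. -/
noncomputable def augMate (a0 : α) (b0 : β) (c : γ) : AugV α β γ → AugV α β γ
  | Sum.inr false => Sum.inl (Sum.inr (Sum.inl (a0, true)))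
  | Sum.inr true => Sum.inl (Sum.inr (Sum.inr (b0, true)))
  | Sum.inl (Sum.inr (Sum.inl (a, true))) =>
      if a = a0 then Sum.inr false else Sum.inl (Sum.inr (Sum.inl (a, false)))
  | Sum.inl (Sum.inr (Sum.inl (a, false))) =>
      if a = a0 then Sum.inl (Sum.inl (c, false)) else Sum.inl (Sum.inr (Sum.inl (a, true)))
  | Sum.inl (Sum.inr (Sum.inr (b, true))) =>
      if b = b0 then Sum.inr true else Sum.inl (Sum.inr (Sum.inr (b, false)))
  | Sum.inl (Sum.inr (Sum.inr (b, false))) =>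
      if b = b0 then Sum.inl (Sum.inl (c, true)) else Sum.inl (Sum.inr (Sum.inr (b, true)))
  | Sum.inl (Sum.inl (c', false)) =>
      if c' = c then Sum.inl (Sum.inr (Sum.inl (a0, false))) else Sum.inl (Sum.inl (c', true))
  | Sum.inl (Sum.inl (c', true)) =>
      if c' = c then Sum.inl (Sum.inr (Sum.inr (b0, false))) else Sum.inl (Sum.inl (c', false))

lemma augMate_involutive (a0 : α) (b0 : β) (c : γ) : Function.Involutive (augMate a0 b0 c) := by
  rintro ((⟨c', _ | _⟩ | ⟨a, _ | _⟩ | ⟨b, _ | _⟩) | _ | _) <;>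
    simp only [augMate] <;> split_ifs <;> simp_all

lemma augAdj_augMate {c : γ} (hca : c ∈ Sa a0) (hcb : c ∈ Sb b0) (v : AugV α β γ) :
    augAdj Sa Sb a0 b0 v (augMate a0 b0 c v) := by
  rcases v with (⟨c', _ | _⟩ | ⟨a, _ | _⟩ | ⟨b, _ | _⟩) | _ | _ <;>
    simp only [augMate] <;> (try split_ifs) <;> subst_vars <;>
    simp [augAdj, gadgetAdj, Set.pair_eq_pair_iff] <;> tauto

end Gadget

/-- Since the gadget graph has a perfect matching `M` of size `|V|/2`, the
maximum matching of the augmented graph (with the new edges `{x, a''}` and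
`{y, b''}`) has size `|M| + 1` iff the augmented graph has a perfect matching.
This happens iff `a ∩ b ≠ ∅`, i.e. iff there is an `M`-augmenting path
from `x` to `y`. -/
theorem stmt14 {α β γ : Type*} (Sa : α → Set γ) (Sb : β → Set γ)
    (a0 : α) (b0 : β) (G' : SimpleGraph (AugV α β γ))
    (hG' : ∀ u v, G'.Adj u v ↔
      ((∃ u' v' : GadgetV α β γ, u = Sum.inl u' ∧ v = Sum.inl v' ∧
          gadgetAdj Sa Sb u' v') ∨
       ({u, v} : Set (AugV α β γ)) =
          {Sum.inr false, Sum.inl (Sum.inr (Sum.inl (a0, true)))} ∨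
       ({u, v} : Set (AugV α β γ)) =
          {Sum.inr true, Sum.inl (Sum.inr (Sum.inr (b0, true)))})) :
    (∃ M' : G'.Subgraph, M'.IsPerfectMatching) ↔
      ∃ c, c ∈ Sa a0 ∧ c ∈ Sb b0 := by
  constructor
  · rintro ⟨M', hM'⟩
    exact exists_mem_inter_of_isPerfectMatching hG' hM'
  · rintro ⟨c, hca, hcb⟩
    exact SimpleGraph.exists_isPerfectMatching_of_involutive (augMate_involutive a0 b0 c)
      fun v => (hG' _ _).2 (augAdj_augMate hca hcb v)
end
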